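/- Let k have characteristic 3 and let V be a 2-dimensional k-vector space with a nonzero alternating form ⟨·|·⟩. Define B(1,2) = k1 ⊕ V with even part k1, odd part V, multiplication 1x = x1 = x and uv = ⟨u|v⟩1 for u,v ∈ V, and quadratic superform q = (q₀, b) with q₀(λ1) = λ², b(u,v) = ⟨u|v⟩ for u,v ∈ V, b(1,1)=2, b(1,V)=0. Then B(1,2) is a composition superalgebra: the identities b(x₀y, x₀z) = q₀(x₀)b(y,z) = b(yx₀, zx₀) and b(xy,zt) + (−1)^{|x||y|+|x||z|+|y||z|} b(zy,xt) = (−1)^{|y||z|} b(x,z)b(y,t) hold for all homogeneous elements. -/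

import Mathlib

section

variable {k V : Type*} [Field k] [AddCommGroup V] [Module k V]

/-- The multiplication of `B(1,2) = k1 ⊕ V` : `1x = x1 = x` and `uv = ⟨u|v⟩1`. -/
noncomputable def b12mul (B : LinearMap.BilinForm k V) (x y : k × V) : k × V :=
  (x.1 * y.1 + B x.2 y.2, x.1 • y.2 + y.1 • x.2)

/-- The bilinear form of the norm of `B(1,2)` : `b(1,1) = 2`, `b(1,V) = 0`,
`b(u,v) = ⟨u|v⟩`. -/
noncomputable def b12form (B : LinearMap.BilinForm k V) (x y : k × V) : k :=
  2 * x.1 * y.1 + B x.2 y.2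

/-- `x` is homogeneous of parity `p` in `B(1,2) = k1 ⊕ V`. -/
def b12homog (p : ZMod 2) (x : k × V) : Prop :=
  (p = 0 ∧ x.2 = 0) ∨ (p = 1 ∧ x.1 = 0)

end

/-!
Multiplying by an even element `λ1` scales both components by `λ`, which gives the identities
for `x₀` even. The super identity is checked on the sixteen parity patterns; in characteristic 3
we have `2 = -1`, and when all four elements are odd what remains is the relation
`⟨x|y⟩⟨z|t⟩ + ⟨y|z⟩⟨x|t⟩ + ⟨z|x⟩⟨y|t⟩ = 0`. It holds for an alternating form on a plane
because there `⟨u|v⟩` is a fixed multiple of the determinant of `u, v`, so the relation is the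
Plücker relation between the `2 × 2` minors of a `2 × 4` matrix.
-/

namespace LinearMap.BilinForm.IsAlt

theorem apply_eq_det_mul {R M : Type*} [CommRing R] [AddCommGroup M] [Module R M]
    {B : LinearMap.BilinForm R M} (hB : B.IsAlt) (b : Module.Basis (Fin 2) R M) (u v : M) :
    B u v = (b.repr u 0 * b.repr v 1 - b.repr u 1 * b.repr v 0) * B (b 0) (b 1) := by
  conv_lhs => rw [← b.sum_repr u, ← b.sum_repr v]
  simp only [Fin.sum_univ_two, map_add, map_smul, LinearMap.add_apply, LinearMap.smul_apply,
    smul_eq_mul, hB.self_eq_zero, ← hB.neg_eq (b 0) (b 1)]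
  ring

theorem cyclic_mul_add_eq_zero {k V : Type*} [Field k] [AddCommGroup V] [Module k V]
    {B : LinearMap.BilinForm k V} (hB : B.IsAlt) (hdim : Module.finrank k V = 2) (u v w s : V) :
    B u v * B w s + B v w * B u s + B w u * B v s = 0 := by
  have := Module.finite_of_finrank_eq_succ hdim
  have h := hB.apply_eq_det_mul (Module.finBasisOfFinrankEq k V hdim)
  rw [h u v, h w s, h v w, h u s, h w u, h v s]
  ring

end LinearMap.BilinForm.IsAlt

section B12

variable {k V : Type*} [Field k] [AddCommGroup V] [Module k V] (B : LinearMap.BilinForm k V)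

theorem b12form_b12mul_scalar_left (a : k) (y z : k × V) :
    b12form B (b12mul B (a, 0) y) (b12mul B (a, 0) z) = a ^ 2 * b12form B y z := by
  simp only [b12mul, b12form, map_zero, LinearMap.zero_apply, smul_zero, map_add, map_smul,
    LinearMap.add_apply, LinearMap.smul_apply, smul_eq_mul]
  ring

theorem b12form_b12mul_scalar_right (a : k) (y z : k × V) :
    b12form B (b12mul B y (a, 0)) (b12mul B z (a, 0)) = a ^ 2 * b12form B y z := by
  simp only [b12mul, b12form, map_zero, LinearMap.zero_apply, smul_zero, map_add, map_smul,
    LinearMap.add_apply, LinearMap.smul_apply, smul_eq_mul]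
  ring

theorem b12form_super_identity [CharP k 3] (hdim : Module.finrank k V = 2) (hB : B.IsAlt)
    {px py pz pt : ZMod 2} {x y z t : k × V}
    (hx : b12homog px x) (hy : b12homog py y) (hz : b12homog pz z) (ht : b12homog pt t) :
    b12form B (b12mul B x y) (b12mul B z t)
        + (-1 : k) ^ (px.val * py.val + px.val * pz.val + py.val * pz.val) *
            b12form B (b12mul B z y) (b12mul B x t)
      = (-1 : k) ^ (py.val * pz.val) * (b12form B x z * b12form B y t) := by
  obtain ⟨x1, x2⟩ := x
  obtain ⟨y1, y2⟩ := y
  obtain ⟨z1, z2⟩ := z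
  obtain ⟨t1, t2⟩ := t
  have h3 : (3 : k) = 0 := CharP.cast_eq_zero k 3
  have hcyc := hB.cyclic_mul_add_eq_zero hdim x2 y2 z2 t2
  have hyx := (hB.neg_eq x2 y2).symm
  have hzx := (hB.neg_eq x2 z2).symm
  have hzy := (hB.neg_eq y2 z2).symm
  -- In each parity pattern both sides are polynomials in the coordinates and the values of `B`,
  -- equal modulo `3 = 0`, skew-symmetry and the cyclic relation.
  rcases hx with ⟨rfl, rfl : x2 = 0⟩ | ⟨rfl, rfl : x1 = 0⟩ <;>
  rcases hy with ⟨rfl, rfl : y2 = 0⟩ | ⟨rfl, rfl : y1 = 0⟩ <;>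
  rcases hz with ⟨rfl, rfl : z2 = 0⟩ | ⟨rfl, rfl : z1 = 0⟩ <;>
  rcases ht with ⟨rfl, rfl : t2 = 0⟩ | ⟨rfl, rfl : t1 = 0⟩ <;>
  simp [b12mul, b12form, ZMod.val_one'' (by decide : (2 : ℕ) ≠ 1)] <;> grind

end B12

theorem stmt4_general (k : Type*) [Field k] [CharP k 3]
    (V : Type*) [AddCommGroup V] [Module k V]
    (hdim : Module.finrank k V = 2)
    (B : LinearMap.BilinForm k V) (halt : B.IsAlt) :
    (∀ a c : k, (a * c) ^ 2 = a ^ 2 * c ^ 2) ∧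
    (∀ (a : k) (y z : k × V),
      b12form B (b12mul B (a, 0) y) (b12mul B (a, 0) z) = a ^ 2 * b12form B y z ∧
      b12form B (b12mul B y (a, 0)) (b12mul B z (a, 0)) = a ^ 2 * b12form B y z) ∧
    (∀ (px py pz pt : ZMod 2) (x y z t : k × V),
      b12homog px x → b12homog py y → b12homog pz z → b12homog pt t →
      b12form B (b12mul B x y) (b12mul B z t)
        + ((-1 : k) ^ (px.val * py.val + px.val * pz.val + py.val * pz.val)) *
            b12form B (b12mul B z y) (b12mul B x t)
      = ((-1 : k) ^ (py.val * pz.val)) * (b12form B x z * b12form B y t)) :=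
  ⟨fun a c => mul_pow a c 2,
    fun a y z => ⟨b12form_b12mul_scalar_left B a y z, b12form_b12mul_scalar_right B a y z⟩,
    fun _ _ _ _ _ _ _ _ hx hy hz ht => b12form_super_identity B hdim halt hx hy hz ht⟩

/-- In characteristic 3, `B(1,2)` is a composition superalgebra: the norm is
multiplicative on the even part, `b(x₀y, x₀z) = q₀(x₀)b(y,z) = b(yx₀, zx₀)`, and
`b(xy,zt) + (−1)^{|x||y|+|x||z|+|y||z|} b(zy,xt) = (−1)^{|y||z|} b(x,z)b(y,t)`
for all homogeneous elements. -/
theorem stmt4 (k : Type*) [Field k] [CharP k 3]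
    (V : Type*) [AddCommGroup V] [Module k V]
    (hdim : Module.finrank k V = 2)
    (B : LinearMap.BilinForm k V) (halt : B.IsAlt) (hne : B ≠ 0) :
    (∀ a c : k, (a * c) ^ 2 = a ^ 2 * c ^ 2) ∧
    (∀ (a : k) (y z : k × V),
      b12form B (b12mul B (a, 0) y) (b12mul B (a, 0) z) = a ^ 2 * b12form B y z ∧
      b12form B (b12mul B y (a, 0)) (b12mul B z (a, 0)) = a ^ 2 * b12form B y z) ∧
    (∀ (px py pz pt : ZMod 2) (x y z t : k × V),
      b12homog px x → b12homog py y → b12homog pz z → b12homog pt t →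
      b12form B (b12mul B x y) (b12mul B z t)
        + ((-1 : k) ^ (px.val * py.val + px.val * pz.val + py.val * pz.val)) *
            b12form B (b12mul B z y) (b12mul B x t)
      = ((-1 : k) ^ (py.val * pz.val)) * (b12form B x z * b12form B y t)) :=
  stmt4_general k V hdim B halt
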